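/- arXiv:1904.07354 — 5 statements merged into one kernel-verified Lean document; each statement's English description precedes it below -/
import Mathlib

section
/- Let M ≥ 1 and ε > 0, and let u : ℝ × ℝ → ℝ be 2π-periodic in its second variable, twice continuously differentiable on [-M,M] × ℝ, harmonic there (∂²u/∂s² + ∂²u/∂θ² = 0), and satisfy |u| ≤ ε on [-M,M] × ℝ. Then there exist real numbers a₀, b₀ and, for every integer n ≥ 1, real numbers aₙ, bₙ, cₙ, dₙ, such that for every s ∈ [-M,M]: (1/2π) ∫₀^{2π} u(s,θ) dθ = a₀ + b₀ s, (1/π) ∫₀^{2π} u(s,θ) cos(nθ) dθ = aₙ e^{ns} + cₙ e^{-ns}, and (1/π) ∫₀^{2π} u(s,θ) sin(nθ) dθ = bₙ e^{ns} + dₙ e^{-ns}; moreover these coefficients satisfy |a₀| ≤ ε, |b₀| ≤ 2ε/M, and |aₙ|, |bₙ|, |cₙ|, |dₙ| ≤ 4 ε e^{-nM} for every n ≥ 1. -/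
/-!
Pair `u(s, ·)` with a `2π`-periodic weight `w` satisfying `w'' = -n² w` (namely `1`, `cos nθ`,
`sin nθ`) to get `F(s) = ∫₀^{2π} u(s,θ) w(θ) dθ`. Differentiating under the integral, using
`u_ss = -u_θθ` and integrating by parts twice in `θ` (periodicity kills the boundary terms) gives
`F'' = n² F` on `(-M, M)`; hence `F = a + b s` for `n = 0` and `F = A e^{ns} + C e^{-ns}` for
`n ≥ 1`, first on the open interval and then, by continuity, on `[-M, M]`. Since `|F| ≤ 2πε`,
the bounds come from the values at `s = 0, ±M`: solving the `2 × 2` system at `±M` gives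
`|A|, |C| ≤ 2πε / (e^{nM} - e^{-nM}) ≤ 4πε e^{-nM}`, because `e^{2nM} ≥ 2`.
-/

open Real Set Filter intervalIntegral Function

/- Partial derivatives are taken as one-variable `deriv`s of the slices, so that the harmonicity
hypothesis of the theorem reads `partialFst (partialFst u) + partialSnd (partialSnd u) = 0`. -/
noncomputable def partialFst (f : ℝ × ℝ → ℝ) (p : ℝ × ℝ) : ℝ :=
  deriv (fun s => f (s, p.2)) p.1

noncomputable def partialSnd (f : ℝ × ℝ → ℝ) (p : ℝ × ℝ) : ℝ :=
  deriv (fun θ => f (p.1, θ)) p.2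

section Partial

variable {f : ℝ × ℝ → ℝ} {O : Set (ℝ × ℝ)} {m n : WithTop ℕ∞} {p : ℝ × ℝ}

theorem ContDiffOn.hasDerivAt_partialFst (hf : ContDiffOn ℝ n f O) (hO : IsOpen O) (hn : n ≠ 0)
    (hp : p ∈ O) : HasDerivAt (fun s => f (s, p.2)) (partialFst f p) p.1 :=
  (((hf.differentiableOn hn).differentiableAt (hO.mem_nhds hp)).comp p.1
    (differentiableAt_id.prodMk (differentiableAt_const _))).hasDerivAt

theorem ContDiffOn.partialFst (hf : ContDiffOn ℝ n f O) (hO : IsOpen O) (hmn : m + 1 ≤ n) :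
    ContDiffOn ℝ m (partialFst f) O := by
  refine ((ContinuousLinearMap.apply ℝ ℝ ((1 : ℝ), (0 : ℝ))).contDiff.comp_contDiffOn
    (hf.fderiv_of_isOpen hO hmn)).congr fun p hp => ?_
  have hd := (hf.differentiableOn ?_).differentiableAt (hO.mem_nhds hp)
  · exact (hd.hasFDerivAt.comp_hasDerivAt p.1
      ((hasDerivAt_id _).prodMk (hasDerivAt_const _ _))).deriv
  · exact (lt_of_lt_of_le (by simp) hmn).ne'

end Partial

theorem ContinuousOn.continuous_comp_prodMk {F : ℝ × ℝ → ℝ} {U : Set ℝ}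
    (hF : ContinuousOn F (U ×ˢ univ)) {s : ℝ} (hs : s ∈ U) : Continuous fun θ => F (s, θ) :=
  hF.comp_continuous (continuous_const.prodMk continuous_id) fun _ => ⟨hs, trivial⟩

theorem hasDerivAt_intervalIntegral_of_continuousOn {F F' : ℝ × ℝ → ℝ} {U : Set ℝ}
    (hU : IsOpen U) (hF : ContinuousOn F (U ×ˢ univ)) (hF' : ContinuousOn F' (U ×ˢ univ))
    (hd : ∀ p ∈ U ×ˢ univ, HasDerivAt (fun s => F (s, p.2)) (F' p) p.1) (a b : ℝ)
    {s₀ : ℝ} (hs₀ : s₀ ∈ U) :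
    HasDerivAt (fun s => ∫ θ in a..b, F (s, θ)) (∫ θ in a..b, F' (s₀, θ)) s₀ := by
  obtain ⟨δ, hδ, hball⟩ := Metric.nhds_basis_closedBall.mem_iff.mp (hU.mem_nhds hs₀)
  have hK : Metric.closedBall s₀ δ ×ˢ uIcc a b ⊆ U ×ˢ univ :=
    prod_mono hball (subset_univ _)
  obtain ⟨C, hC⟩ :=
    ((isCompact_closedBall s₀ δ).prod isCompact_uIcc).exists_bound_of_continuousOn (hF'.mono hK)
  refine (intervalIntegral.hasDerivAt_integral_of_dominated_loc_of_deriv_le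
    (F := fun s θ => F (s, θ)) (F' := fun s θ => F' (s, θ)) (bound := fun _ => C)
    (Metric.closedBall_mem_nhds s₀ hδ) ?_ ?_ ?_ ?_ intervalIntegrable_const ?_).2
  · filter_upwards [hU.mem_nhds hs₀] with s hs
    exact (hF.continuous_comp_prodMk hs).aestronglyMeasurable
  · exact (hF.continuous_comp_prodMk hs₀).intervalIntegrable _ _
  · exact (hF'.continuous_comp_prodMk hs₀).aestronglyMeasurable
  · exact Eventually.of_forall fun θ hθ s hs => hC (s, θ) ⟨hs, uIoc_subset_uIcc hθ⟩
  · exact Eventually.of_forall fun θ _ s hs => hd (s, θ) ⟨hball hs, trivial⟩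

theorem continuousOn_intervalIntegral_of_continuousOn {F : ℝ × ℝ → ℝ} {a b : ℝ}
    (hab : a ≤ b) (hF : ContinuousOn F (Icc a b ×ˢ univ)) (c d : ℝ) :
    ContinuousOn (fun s => ∫ θ in c..d, F (s, θ)) (Icc a b) := by
  -- Clamping `s` to `[a, b]` extends `F` to a continuous function on the whole plane.
  have hG : Continuous fun p : ℝ × ℝ => F (projIcc a b hab p.1, p.2) :=
    hF.comp_continuous (continuous_projIcc.subtype_val.prodMap continuous_id)
      fun p => ⟨Subtype.mem _, trivial⟩
  refine (continuous_parametric_intervalIntegral_of_continuous' (μ := MeasureTheory.volume)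
    (f := fun s θ => F (projIcc a b hab s, θ)) hG c d).continuousOn.congr fun s hs => ?_
  simp only [projIcc_of_mem hab hs]

theorem Function.Periodic.deriv {f : ℝ → ℝ} {T : ℝ} (hf : Periodic f T) :
    Periodic (deriv f) T :=
  fun x => by rw [← deriv_comp_add_const, funext hf]

theorem integral_mul_deriv_eq_neg_of_periodic {f g : ℝ → ℝ} {T : ℝ}
    (hf : ContDiff ℝ 1 f) (hg : ContDiff ℝ 1 g) (hfT : Periodic f T) (hgT : Periodic g T) :
    ∫ x in 0..T, f x * deriv g x = -∫ x in 0..T, deriv f x * g x := by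
  rw [integral_mul_deriv_eq_deriv_mul
    (fun x _ => (hf.differentiable one_ne_zero x).hasDerivAt)
    (fun x _ => (hg.differentiable one_ne_zero x).hasDerivAt)
    ((hf.continuous_deriv le_rfl).intervalIntegrable _ _)
    ((hg.continuous_deriv le_rfl).intervalIntegrable _ _)]
  simp [← hfT 0, ← hgT 0]

theorem integral_deriv_deriv_mul_of_periodic {f g : ℝ → ℝ} {T : ℝ}
    (hf : ContDiff ℝ 2 f) (hg : ContDiff ℝ 2 g) (hfT : Periodic f T) (hgT : Periodic g T) :
    ∫ x in 0..T, deriv (deriv f) x * g x = ∫ x in 0..T, f x * deriv (deriv g) x := by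
  have hf' : ContDiff ℝ 1 (deriv f) := hf.deriv'
  have hg' : ContDiff ℝ 1 (deriv g) := hg.deriv'
  calc ∫ x in 0..T, deriv (deriv f) x * g x
      = ∫ x in 0..T, g x * deriv (deriv f) x := by simp only [mul_comm]
    _ = -∫ x in 0..T, deriv g x * deriv f x :=
      integral_mul_deriv_eq_neg_of_periodic (hg.of_le one_le_two) hf' hgT hfT.deriv
    _ = -∫ x in 0..T, deriv f x * deriv g x := by simp only [mul_comm]
    _ = ∫ x in 0..T, f x * deriv (deriv g) x := by
      rw [integral_mul_deriv_eq_neg_of_periodic (hf.of_le one_le_two) hg' hfT hgT.deriv]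

section ODE

variable {s : Set ℝ} {f f' : ℝ → ℝ}

theorem IsOpen.exists_eq_const_of_hasDerivAt_zero (hs : IsOpen s) (hs' : IsPreconnected s)
    (hf : ∀ x ∈ s, HasDerivAt f 0 x) : ∃ c, ∀ x ∈ s, f x = c :=
  hs.exists_is_const_of_deriv_eq_zero hs'
    (fun x hx => (hf x hx).differentiableAt.differentiableWithinAt) fun x hx => (hf x hx).deriv

theorem IsOpen.exists_eq_add_mul_of_hasDerivAt (hs : IsOpen s) (hs' : IsPreconnected s)
    (hf : ∀ x ∈ s, HasDerivAt f (f' x) x) (hf' : ∀ x ∈ s, HasDerivAt f' 0 x) :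
    ∃ a b, ∀ x ∈ s, f x = a + b * x := by
  obtain ⟨b, hb⟩ := hs.exists_eq_const_of_hasDerivAt_zero hs' hf'
  obtain ⟨a, ha⟩ := hs.exists_eq_const_of_hasDerivAt_zero hs' (f := fun x => f x - b * x)
    fun x hx => by
      have h := (hf x hx).sub ((hasDerivAt_id' x).const_mul b)
      rwa [hb x hx, mul_one, sub_self] at h
  exact ⟨a, b, fun x hx => by linarith [ha x hx]⟩

theorem IsOpen.exists_eq_exp_add_exp_of_hasDerivAt (hs : IsOpen s) (hs' : IsPreconnected s)
    {k : ℝ} (hk : k ≠ 0) (hf : ∀ x ∈ s, HasDerivAt f (f' x) x)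
    (hf' : ∀ x ∈ s, HasDerivAt f' (k ^ 2 * f x) x) :
    ∃ A C, ∀ x ∈ s, f x = A * exp (k * x) + C * exp (-(k * x)) := by
  have hexp (c x : ℝ) : HasDerivAt (fun y => exp (c * y)) (c * exp (c * x)) x := by
    simpa [mul_comm] using ((hasDerivAt_id x).const_mul c).exp
  -- `f ± f'/k` solves `g' = ±k g`.
  obtain ⟨A, hA⟩ := hs.exists_eq_const_of_hasDerivAt_zero hs'
    (f := fun x => (f x + f' x / k) * exp (-k * x) / 2) fun x hx => by
      refine ((((hf x hx).add ((hf' x hx).div_const k)).mul (hexp (-k) x)).div_const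
        2).congr_deriv ?_
      simp only [Pi.add_apply]
      field_simp
      ring
  obtain ⟨C, hC⟩ := hs.exists_eq_const_of_hasDerivAt_zero hs'
    (f := fun x => (f x - f' x / k) * exp (k * x) / 2) fun x hx => by
      refine ((((hf x hx).sub ((hf' x hx).div_const k)).mul (hexp k x)).div_const
        2).congr_deriv ?_
      simp only [Pi.sub_apply]
      field_simp
      ring
  refine ⟨A, C, fun x hx => ?_⟩
  have hinv : exp (-(k * x)) * exp (k * x) = 1 := by rw [← exp_add, neg_add_cancel, exp_zero]
  rw [← hA x hx, ← hC x hx, neg_mul]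
  linear_combination (-f x) * hinv

end ODE

theorem abs_le_two_mul_exp_neg_of_abs_le {A C B t : ℝ} (ht : log 2 ≤ 2 * t)
    (h₁ : |A * exp t + C * exp (-t)| ≤ B) (h₂ : |A * exp (-t) + C * exp t| ≤ B) :
    |A| ≤ 2 * B * exp (-t) := by
  set E := exp t
  set E' := exp (-t)
  have hE : 0 < E := exp_pos t
  have hE' : 0 < E' := exp_pos (-t)
  have hEE' : E * E' = 1 := by rw [← exp_add, add_neg_cancel, exp_zero]
  have hE2 : 2 ≤ E ^ 2 := by
    calc (2 : ℝ) = exp (log 2) := (exp_log two_pos).symm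
      _ ≤ exp (2 * t) := exp_le_exp.mpr ht
      _ = E ^ 2 := by rw [sq, ← exp_add, two_mul]
  have hgap : E / 2 ≤ E - E' := by nlinarith
  -- `A (E² - E'²)` is `E` times the first value minus `E'` times the second.
  have hA : |A| * ((E - E') * (E + E')) ≤ B * (E + E') :=
    calc |A| * ((E - E') * (E + E'))
        = |E * (A * E + C * E') - E' * (A * E' + C * E)| := by
          rw [← abs_of_nonneg (by nlinarith : 0 ≤ (E - E') * (E + E')), ← abs_mul]
          ring_nf
      _ ≤ E * |A * E + C * E'| + E' * |A * E' + C * E| := by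
          refine (abs_sub _ _).trans_eq ?_
          rw [abs_mul, abs_mul, abs_of_pos hE, abs_of_pos hE']
      _ ≤ B * (E + E') := by nlinarith
  have hA' : |A| * (E - E') ≤ B := by
    rw [← mul_assoc] at hA
    exact le_of_mul_le_mul_right hA (by positivity)
  have hAE : |A| * E ≤ 2 * B := by nlinarith [mul_le_mul_of_nonneg_left hgap (abs_nonneg A)]
  calc |A| = |A| * E * E' := by rw [mul_assoc, hEE', mul_one]
    _ ≤ 2 * B * E' := mul_le_mul_of_nonneg_right hAE hE'.le

section Interval

variable {M B : ℝ} {f f' : ℝ → ℝ}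

theorem exists_eq_linear_on_Icc (hM : 0 < M) (hf : ContinuousOn f (Icc (-M) M))
    (hf' : ∀ x ∈ Ioo (-M) M, HasDerivAt f (f' x) x)
    (hf'' : ∀ x ∈ Ioo (-M) M, HasDerivAt f' 0 x) (hB : ∀ x ∈ Icc (-M) M, |f x| ≤ B) :
    ∃ a b, (∀ x ∈ Icc (-M) M, f x = a + b * x) ∧ |a| ≤ B ∧ |b| ≤ B / M := by
  obtain ⟨a, b, hab⟩ :=
    isOpen_Ioo.exists_eq_add_mul_of_hasDerivAt isPreconnected_Ioo hf' hf''
  have hrepr : EqOn f (fun x => a + b * x) (Icc (-M) M) :=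
    Set.EqOn.of_subset_closure hab hf (by fun_prop) Ioo_subset_Icc_self
      (closure_Ioo (by linarith)).ge
  have hval : ∀ x ∈ Icc (-M) M, |a + b * x| ≤ B := fun x hx => by
    simpa only [hrepr hx] using hB x hx
  refine ⟨a, b, hrepr, by simpa using hval 0 ⟨by linarith, hM.le⟩, ?_⟩
  obtain ⟨hpos₁, hpos₂⟩ := abs_le.mp (hval M ⟨by linarith, le_rfl⟩)
  obtain ⟨hneg₁, hneg₂⟩ := abs_le.mp (hval (-M) ⟨le_rfl, by linarith⟩)
  rw [le_div_iff₀ hM, ← abs_of_pos hM, ← abs_mul]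
  exact abs_le.mpr ⟨by linarith, by linarith⟩

theorem exists_eq_exp_add_exp_on_Icc {k : ℝ} (hM : 0 < M) (hkM : log 2 ≤ 2 * (k * M))
    (hf : ContinuousOn f (Icc (-M) M)) (hf' : ∀ x ∈ Ioo (-M) M, HasDerivAt f (f' x) x)
    (hf'' : ∀ x ∈ Ioo (-M) M, HasDerivAt f' (k ^ 2 * f x) x)
    (hB : ∀ x ∈ Icc (-M) M, |f x| ≤ B) :
    ∃ A C, (∀ x ∈ Icc (-M) M, f x = A * exp (k * x) + C * exp (-(k * x))) ∧
      |A| ≤ 2 * B * exp (-(k * M)) ∧ |C| ≤ 2 * B * exp (-(k * M)) := by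
  have hk : k ≠ 0 := by
    rintro rfl
    linarith [log_pos one_lt_two, hkM.trans_eq (by ring : 2 * (0 * M) = 0)]
  obtain ⟨A, C, hAC⟩ :=
    isOpen_Ioo.exists_eq_exp_add_exp_of_hasDerivAt isPreconnected_Ioo hk hf' hf''
  have hrepr : EqOn f (fun x => A * exp (k * x) + C * exp (-(k * x))) (Icc (-M) M) :=
    Set.EqOn.of_subset_closure hAC hf (by fun_prop) Ioo_subset_Icc_self
      (closure_Ioo (by linarith)).ge
  have hval : ∀ x ∈ Icc (-M) M, |A * exp (k * x) + C * exp (-(k * x))| ≤ B := fun x hx => by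
    simpa only [hrepr hx] using hB x hx
  have hpos := hval M ⟨by linarith, le_rfl⟩
  have hneg := hval (-M) ⟨le_rfl, by linarith⟩
  rw [mul_neg, neg_neg] at hneg
  refine ⟨A, C, hrepr, abs_le_two_mul_exp_neg_of_abs_le hkM hpos hneg,
    abs_le_two_mul_exp_neg_of_abs_le (A := C) (C := A) hkM ?_ ?_⟩
  · rwa [add_comm]
  · rwa [add_comm]

end Interval

noncomputable def fourierMode (u : ℝ × ℝ → ℝ) (w : ℝ → ℝ) (s : ℝ) : ℝ :=
  ∫ θ in 0..2 * π, u (s, θ) * w θ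

section FourierMode

variable {u : ℝ × ℝ → ℝ} {w : ℝ → ℝ} {U : Set ℝ} {s : ℝ}

theorem continuousOn_fourierMode {a b : ℝ} (hab : a ≤ b)
    (hu : ContinuousOn u (Icc a b ×ˢ univ)) (hw : Continuous w) :
    ContinuousOn (fourierMode u w) (Icc a b) :=
  continuousOn_intervalIntegral_of_continuousOn hab
    (hu.mul (hw.comp continuous_snd).continuousOn) 0 (2 * π)

theorem abs_fourierMode_le {ε : ℝ} (hu : ∀ θ, |u (s, θ)| ≤ ε) (hw : ∀ θ, |w θ| ≤ 1) :
    |fourierMode u w s| ≤ 2 * π * ε := by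
  have h := norm_integral_le_of_norm_le_const (a := 0) (b := 2 * π) (C := ε)
    (f := fun θ => u (s, θ) * w θ) fun θ _ => by
      rw [norm_mul, ← mul_one ε]
      exact mul_le_mul (hu θ) (hw θ) (norm_nonneg _) ((abs_nonneg _).trans (hu θ))
  rw [sub_zero, abs_of_pos two_pi_pos] at h
  exact h.trans_eq (mul_comm _ _)

theorem hasDerivAt_fourierMode (hU : IsOpen U) (hu : ContDiffOn ℝ 1 u (U ×ˢ univ))
    (hw : Continuous w) (hs : s ∈ U) :
    HasDerivAt (fourierMode u w) (fourierMode (partialFst u) w s) s :=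
  have hO := hU.prod isOpen_univ
  hasDerivAt_intervalIntegral_of_continuousOn hU
    (hu.continuousOn.mul (hw.comp continuous_snd).continuousOn)
    ((hu.partialFst hO (m := 0) (by simp)).continuousOn.mul
      (hw.comp continuous_snd).continuousOn)
    (fun p hp => (hu.hasDerivAt_partialFst hO one_ne_zero hp).mul_const (w p.2)) 0 (2 * π) hs

theorem fourierMode_partialFst_partialFst (hper : ∀ s θ, u (s, θ + 2 * π) = u (s, θ))
    (hu : ContDiffOn ℝ 2 u (U ×ˢ univ))
    (hΔ : ∀ p ∈ U ×ˢ univ, partialFst (partialFst u) p + partialSnd (partialSnd u) p = 0)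
    {μ : ℝ} (hw : ContDiff ℝ 2 w) (hwT : Periodic w (2 * π))
    (hw'' : ∀ θ, deriv (deriv w) θ = -μ * w θ) (hs : s ∈ U) :
    fourierMode (partialFst (partialFst u)) w s = μ * fourierMode u w s := by
  have hslice : ContDiff ℝ 2 fun θ => u (s, θ) :=
    contDiffOn_univ.mp <| hu.comp (contDiff_const.prodMk contDiff_id).contDiffOn
      fun _ _ => ⟨hs, trivial⟩
  calc fourierMode (partialFst (partialFst u)) w s
      = -∫ θ in 0..2 * π, deriv (deriv fun θ => u (s, θ)) θ * w θ := by
        rw [← integral_neg]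
        refine integral_congr fun θ _ => ?_
        simp only [eq_neg_iff_add_eq_zero.mpr (hΔ (s, θ) ⟨hs, trivial⟩), neg_mul]
        rfl
    _ = -∫ θ in 0..2 * π, u (s, θ) * deriv (deriv w) θ := by
        rw [integral_deriv_deriv_mul_of_periodic hslice hw (fun θ => hper s θ) hwT]
    _ = μ * fourierMode u w s := by
        rw [fourierMode, ← integral_const_mul, ← integral_neg]
        refine integral_congr fun θ _ => ?_
        simp only [hw'']
        ring

theorem hasDerivAt_fourierMode_partialFst (hU : IsOpen U)
    (hper : ∀ s θ, u (s, θ + 2 * π) = u (s, θ)) (hu : ContDiffOn ℝ 2 u (U ×ˢ univ))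
    (hΔ : ∀ p ∈ U ×ˢ univ, partialFst (partialFst u) p + partialSnd (partialSnd u) p = 0)
    {μ : ℝ} (hw : ContDiff ℝ 2 w) (hwT : Periodic w (2 * π))
    (hw'' : ∀ θ, deriv (deriv w) θ = -μ * w θ) (hs : s ∈ U) :
    HasDerivAt (fourierMode (partialFst u) w) (μ * fourierMode u w s) s := by
  rw [← fourierMode_partialFst_partialFst hper hu hΔ hw hwT hw'' hs]
  exact hasDerivAt_fourierMode hU (hu.partialFst (hU.prod isOpen_univ) (by norm_num))
    hw.continuous hs

end FourierMode

theorem deriv_cos_mul (c : ℝ) : deriv (fun θ => cos (c * θ)) = fun θ => -c * sin (c * θ) := by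
  funext θ
  exact ((hasDerivAt_id θ).const_mul c).cos.deriv.trans (by simp; ring)

theorem deriv_sin_mul (c : ℝ) : deriv (fun θ => sin (c * θ)) = fun θ => c * cos (c * θ) := by
  funext θ
  exact ((hasDerivAt_id θ).const_mul c).sin.deriv.trans (by simp; ring)

theorem deriv_deriv_cos_mul (c x : ℝ) :
    deriv (deriv fun θ => cos (c * θ)) x = -c ^ 2 * cos (c * x) := by
  rw [deriv_cos_mul, deriv_const_mul_field', deriv_sin_mul]
  ring

theorem deriv_deriv_sin_mul (c x : ℝ) :
    deriv (deriv fun θ => sin (c * θ)) x = -c ^ 2 * sin (c * x) := by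
  rw [deriv_sin_mul, deriv_const_mul_field', deriv_cos_mul]
  ring

theorem periodic_cos_nat_mul (n : ℕ) : Periodic (fun θ => cos (n * θ)) (2 * π) := fun θ => by
  simp only [mul_add, cos_add_nat_mul_two_pi]

theorem periodic_sin_nat_mul (n : ℕ) : Periodic (fun θ => sin (n * θ)) (2 * π) := fun θ => by
  simp only [mul_add, sin_add_nat_mul_two_pi]

section Cylinder

variable {M ε : ℝ} {u : ℝ × ℝ → ℝ}

theorem exists_mean_eq_linear (hM : 0 < M) (hper : ∀ s θ, u (s, θ + 2 * π) = u (s, θ))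
    (hreg : ContDiffOn ℝ 2 u (Icc (-M) M ×ˢ univ))
    (hharm : ∀ s ∈ Icc (-M) M, ∀ θ,
      partialFst (partialFst u) (s, θ) + partialSnd (partialSnd u) (s, θ) = 0)
    (hbound : ∀ s ∈ Icc (-M) M, ∀ θ, |u (s, θ)| ≤ ε) :
    ∃ a b, (∀ s ∈ Icc (-M) M, 1 / (2 * π) * ∫ θ in 0..2 * π, u (s, θ) = a + b * s) ∧
      |a| ≤ ε ∧ |b| ≤ ε / M := by
  have hu : ContDiffOn ℝ 2 u (Ioo (-M) M ×ˢ univ) :=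
    hreg.mono (prod_mono Ioo_subset_Icc_self subset_rfl)
  have hΔ : ∀ p ∈ Ioo (-M) M ×ˢ univ,
      partialFst (partialFst u) p + partialSnd (partialSnd u) p = 0 :=
    fun p hp => hharm p.1 (Ioo_subset_Icc_self hp.1) p.2
  obtain ⟨a, b, hab, ha, hb⟩ := exists_eq_linear_on_Icc hM
    (f := fun s => 1 / (2 * π) * fourierMode u (fun _ => 1) s)
    (f' := fun s => 1 / (2 * π) * fourierMode (partialFst u) (fun _ => 1) s)
    (continuousOn_const.mul (continuousOn_fourierMode (by linarith) hreg.continuousOn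
      continuous_const))
    (fun s hs => (hasDerivAt_fourierMode isOpen_Ioo (hu.of_le one_le_two) continuous_const
      hs).const_mul _)
    (fun s hs => by
      simpa using (hasDerivAt_fourierMode_partialFst isOpen_Ioo hper hu hΔ (μ := 0)
        contDiff_const (fun _ => rfl) (fun _ => by simp) hs).const_mul (1 / (2 * π)))
    (fun s hs => by
      rw [abs_mul, abs_of_pos (by positivity), one_div, inv_mul_le_iff₀ (by positivity)]
      exact abs_fourierMode_le (hbound s hs) fun _ => by simp)
  exact ⟨a, b, fun s hs => by simpa [fourierMode] using hab s hs, ha, hb⟩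

theorem exists_fourierCoeff_eq_exp_add_exp (hM : 1 ≤ M) {n : ℕ} (hn : 1 ≤ n)
    (hper : ∀ s θ, u (s, θ + 2 * π) = u (s, θ))
    (hreg : ContDiffOn ℝ 2 u (Icc (-M) M ×ˢ univ))
    (hharm : ∀ s ∈ Icc (-M) M, ∀ θ,
      partialFst (partialFst u) (s, θ) + partialSnd (partialSnd u) (s, θ) = 0)
    (hbound : ∀ s ∈ Icc (-M) M, ∀ θ, |u (s, θ)| ≤ ε) {w : ℝ → ℝ}
    (hw : ContDiff ℝ 2 w) (hwT : Periodic w (2 * π))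
    (hw'' : ∀ θ, deriv (deriv w) θ = -(n : ℝ) ^ 2 * w θ) (hw1 : ∀ θ, |w θ| ≤ 1) :
    ∃ A C, (∀ s ∈ Icc (-M) M,
        1 / π * fourierMode u w s = A * exp (n * s) + C * exp (-(n * s))) ∧
      |A| ≤ 4 * ε * exp (-(n * M)) ∧ |C| ≤ 4 * ε * exp (-(n * M)) := by
  have hu : ContDiffOn ℝ 2 u (Ioo (-M) M ×ˢ univ) :=
    hreg.mono (prod_mono Ioo_subset_Icc_self subset_rfl)
  have hΔ : ∀ p ∈ Ioo (-M) M ×ˢ univ,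
      partialFst (partialFst u) p + partialSnd (partialSnd u) p = 0 :=
    fun p hp => hharm p.1 (Ioo_subset_Icc_self hp.1) p.2
  have hnM : log 2 ≤ 2 * (n * M) := by
    have := one_le_mul_of_one_le_of_one_le (Nat.one_le_cast.mpr hn) hM
    linarith [log_two_lt_d9]
  obtain ⟨A, C, hAC, hA, hC⟩ := exists_eq_exp_add_exp_on_Icc (by linarith) hnM (B := 2 * ε)
    (f := fun s => 1 / π * fourierMode u w s)
    (f' := fun s => 1 / π * fourierMode (partialFst u) w s)
    (continuousOn_const.mul (continuousOn_fourierMode (by linarith) hreg.continuousOn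
      hw.continuous))
    (fun s hs => (hasDerivAt_fourierMode isOpen_Ioo (hu.of_le one_le_two) hw.continuous
      hs).const_mul _)
    (fun s hs => by
      simpa [mul_left_comm] using (hasDerivAt_fourierMode_partialFst isOpen_Ioo hper hu hΔ hw
        hwT hw'' hs).const_mul (1 / π))
    (fun s hs => by
      rw [abs_mul, abs_of_pos (by positivity), one_div, inv_mul_le_iff₀ pi_pos]
      exact (abs_fourierMode_le (hbound s hs) hw1).trans_eq (by ring))
  exact ⟨A, C, hAC, hA.trans_eq (by ring), hC.trans_eq (by ring)⟩

end Cylinder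

/-- Fourier coefficient estimates for a bounded harmonic function on the cylinder
`[-M,M] × S¹` (Lemma 3.3): the coefficients of the expansion satisfy `|a₀| ≤ ε`,
`|b₀| ≤ 2ε/M` and `|aₙ|,|bₙ|,|cₙ|,|dₙ| ≤ 4 ε e^{-nM}`. -/
theorem harmonic_cylinder_coefficients
    (M ε : ℝ) (hM : 1 ≤ M) (hε : 0 < ε) (u : ℝ × ℝ → ℝ)
    (hper : ∀ s θ : ℝ, u (s, θ + 2 * Real.pi) = u (s, θ))
    (hreg : ContDiffOn ℝ 2 u (Set.Icc (-M) M ×ˢ (Set.univ : Set ℝ)))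
    (hharm : ∀ s ∈ Set.Icc (-M) M, ∀ θ : ℝ,
      deriv (fun s' => deriv (fun s'' => u (s'', θ)) s') s +
        deriv (fun θ' => deriv (fun θ'' => u (s, θ'')) θ') θ = 0)
    (hbound : ∀ s ∈ Set.Icc (-M) M, ∀ θ : ℝ, |u (s, θ)| ≤ ε) :
    ∃ (a₀ b₀ : ℝ) (a b c d : ℕ → ℝ),
      (∀ s ∈ Set.Icc (-M) M,
        (1 / (2 * Real.pi)) * ∫ θ in (0:ℝ)..(2 * Real.pi), u (s, θ) = a₀ + b₀ * s ∧
        ∀ n : ℕ, 1 ≤ n →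
          ((1 / Real.pi) * ∫ θ in (0:ℝ)..(2 * Real.pi), u (s, θ) * Real.cos (n * θ) =
              a n * Real.exp (n * s) + c n * Real.exp (-(n * s))) ∧
          ((1 / Real.pi) * ∫ θ in (0:ℝ)..(2 * Real.pi), u (s, θ) * Real.sin (n * θ) =
              b n * Real.exp (n * s) + d n * Real.exp (-(n * s)))) ∧
      |a₀| ≤ ε ∧ |b₀| ≤ 2 * ε / M ∧
      (∀ n : ℕ, 1 ≤ n →
        |a n| ≤ 4 * ε * Real.exp (-(n * M)) ∧ |b n| ≤ 4 * ε * Real.exp (-(n * M)) ∧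
        |c n| ≤ 4 * ε * Real.exp (-(n * M)) ∧ |d n| ≤ 4 * ε * Real.exp (-(n * M))) := by
  obtain ⟨a₀, b₀, h₀, ha₀, hb₀⟩ := exists_mean_eq_linear (by linarith) hper hreg hharm hbound
  have hcoeff : ∀ n : ℕ, ∃ A B C D : ℝ, 1 ≤ n →
      (∀ s ∈ Icc (-M) M,
        1 / π * fourierMode u (fun θ => cos (n * θ)) s = A * exp (n * s) + C * exp (-(n * s)) ∧
        1 / π * fourierMode u (fun θ => sin (n * θ)) s = B * exp (n * s) + D * exp (-(n * s))) ∧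
      |A| ≤ 4 * ε * exp (-(n * M)) ∧ |B| ≤ 4 * ε * exp (-(n * M)) ∧
      |C| ≤ 4 * ε * exp (-(n * M)) ∧ |D| ≤ 4 * ε * exp (-(n * M)) := by
    intro n
    by_cases hn : 1 ≤ n
    · obtain ⟨A, C, hAC, hA, hC⟩ := exists_fourierCoeff_eq_exp_add_exp hM hn hper hreg hharm
        hbound (by fun_prop) (periodic_cos_nat_mul n) (deriv_deriv_cos_mul n)
        fun _ => abs_cos_le_one _
      obtain ⟨B, D, hBD, hB, hD⟩ := exists_fourierCoeff_eq_exp_add_exp hM hn hper hreg hharm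
        hbound (by fun_prop) (periodic_sin_nat_mul n) (deriv_deriv_sin_mul n)
        fun _ => abs_sin_le_one _
      exact ⟨A, B, C, D, fun _ => ⟨fun s hs => ⟨hAC s hs, hBD s hs⟩, hA, hB, hC, hD⟩⟩
    · exact ⟨0, 0, 0, 0, fun h => absurd h hn⟩
  choose a b c d h using hcoeff
  refine ⟨a₀, b₀, a, b, c, d, fun s hs => ⟨h₀ s hs, fun n hn => (h n hn).1 s hs⟩, ha₀,
    hb₀.trans ?_, fun n hn => (h n hn).2⟩
  gcongr
  linarith
end

section
/- Let M > 0, λ > 0 and B ≥ 0, and let w : [-M,M] → ℝ be a twice continuously differentiable function with 0 ≤ w(s) ≤ B and w''(s) ≥ λ² w(s) for all s ∈ [-M,M]. Then w(s) ≤ 2 B e^{λ(|s| - M)} for all s ∈ [-M,M]. -/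
/-!
The function `v s = 2 B e^{-λM} cosh (λ s)` solves `v'' = λ² v`, is at least `B` at `±M`, and is
at most `2 B e^{λ(|s| - M)}`. Wherever `w - v > 0` we have `(w - v)'' ≥ λ² (w - v) > 0`, so
`w - v` is strictly convex near each of its positive values and has no positive interior
maximum; being `≤ 0` at `±M`, it is `≤ 0` throughout.
-/

open Set Topology Real

theorem iteratedDerivWithin_of_mem_nhds {𝕜 F : Type*} [NontriviallyNormedField 𝕜]
    [NormedAddCommGroup F] [NormedSpace 𝕜 F] {n : ℕ} {f : 𝕜 → F} {s : Set 𝕜} {x : 𝕜}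
    (hs : s ∈ 𝓝 x) : iteratedDerivWithin n f s x = iteratedDeriv n f x := by
  rw [iteratedDerivWithin, iteratedDeriv, ← iteratedFDerivWithin_univ,
    ← iteratedFDerivWithin_inter hs (s := univ), univ_inter]

theorem nonpos_of_iteratedDeriv_two_pos_of_pos {a b : ℝ} {g : ℝ → ℝ}
    (hg : ContinuousOn g (Icc a b)) (hg'' : ∀ x ∈ Ioo a b, 0 < g x → 0 < iteratedDeriv 2 g x)
    (ha : g a ≤ 0) (hb : g b ≤ 0) : ∀ x ∈ Icc a b, g x ≤ 0 := by
  by_contra! ⟨x, hx, hgx⟩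
  obtain ⟨s₀, hs₀, hmax⟩ := isCompact_Icc.exists_isMaxOn ⟨x, hx⟩ hg
  have hpos : 0 < g s₀ := hgx.trans_le (hmax hx)
  have hs₀' : s₀ ∈ Ioo a b :=
    ⟨hs₀.1.lt_of_ne (by rintro rfl; linarith), hs₀.2.lt_of_ne (by rintro rfl; linarith)⟩
  have hnhds : ∀ᶠ y in 𝓝 s₀, y ∈ Ioo a b ∧ 0 < g y :=
    (isOpen_Ioo.eventually_mem hs₀').and
      ((hg.continuousAt (Icc_mem_nhds hs₀'.1 hs₀'.2)).eventually (lt_mem_nhds hpos))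
  obtain ⟨l, u, ⟨hl, hu⟩, hlu⟩ := mem_nhds_iff_exists_Ioo_subset.1 hnhds
  obtain ⟨p, hlp, hp⟩ := exists_between hl
  obtain ⟨q, hq, hqu⟩ := exists_between hu
  have hconvex : StrictConvexOn ℝ (Ioo l u) g := by
    refine strictConvexOn_of_deriv2_pos' (convex_Ioo l u)
      (hg.mono fun y hy => Ioo_subset_Icc_self (hlu hy).1) fun y hy => ?_
    rw [← iteratedDeriv_eq_iterate]
    exact hg'' y (hlu hy).1 (hlu hy).2
  have hlt : g s₀ < max (g p) (g q) :=
    hconvex.lt_on_openSegment ⟨hlp, hp.trans hu⟩ ⟨hl.trans hq, hqu⟩ (hp.trans hq).ne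
      (by rw [openSegment_eq_Ioo (hp.trans hq)]; exact ⟨hp, hq⟩)
  have hp' := hmax (Ioo_subset_Icc_self (hlu ⟨hlp, hp.trans hu⟩).1)
  have hq' := hmax (Ioo_subset_Icc_self (hlu ⟨hl.trans hq, hqu⟩).1)
  exact hlt.not_ge (max_le hp' hq')

theorem le_of_iteratedDeriv_two_comparison {a b c : ℝ} {u v : ℝ → ℝ} (hc : 0 < c)
    (hu : ContDiffOn ℝ 2 u (Icc a b)) (hv : ContDiffOn ℝ 2 v (Icc a b))
    (hu'' : ∀ x ∈ Ioo a b, c * u x ≤ iteratedDeriv 2 u x)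
    (hv'' : ∀ x ∈ Ioo a b, iteratedDeriv 2 v x ≤ c * v x)
    (ha : u a ≤ v a) (hb : u b ≤ v b) : ∀ x ∈ Icc a b, u x ≤ v x := by
  have hdiff := nonpos_of_iteratedDeriv_two_pos_of_pos (g := u - v)
    (hu.continuousOn.sub hv.continuousOn) (fun x hx hpos => ?_) (sub_nonpos.2 ha)
    (sub_nonpos.2 hb)
  · exact fun x hx => sub_nonpos.1 (hdiff x hx)
  have hIcc : Icc a b ∈ 𝓝 x := Icc_mem_nhds hx.1 hx.2
  rw [iteratedDeriv_sub (hu.contDiffAt hIcc) (hv.contDiffAt hIcc)]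
  have hgap : 0 < c * (u x - v x) := mul_pos hc hpos
  linarith [hu'' x hx, hv'' x hx]

theorem iteratedDeriv_two_const_mul_cosh_mul (k l x : ℝ) :
    iteratedDeriv 2 (fun s => k * cosh (l * s)) x = l ^ 2 * (k * cosh (l * x)) := by
  rw [iteratedDeriv_const_mul_field, iteratedDeriv_comp_const_mul contDiff_cosh,
    show (2 : ℕ) = 2 * 1 from rfl, iteratedDeriv_even_cosh]
  ring

theorem exp_le_two_mul_cosh (x : ℝ) : exp x ≤ 2 * cosh x := by
  rw [cosh_eq]
  linarith [exp_pos (-x)]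

theorem cosh_le_exp_abs (x : ℝ) : cosh x ≤ exp |x| := by
  rw [← cosh_abs, cosh_eq]
  linarith [exp_le_exp.2 (neg_le_self (abs_nonneg x)), exp_le_exp.2 (abs_nonneg x)]

theorem ode_comparison_general
    (M lam B : ℝ) (hM : 0 < M) (hlam : 0 < lam) (hB : 0 ≤ B) (w : ℝ → ℝ)
    (hreg : ContDiffOn ℝ 2 w (Set.Icc (-M) M))
    (hwB : ∀ s ∈ Set.Icc (-M) M, w s ≤ B)
    (hconv : ∀ s ∈ Set.Icc (-M) M,
      lam ^ 2 * w s ≤ iteratedDerivWithin 2 w (Set.Icc (-M) M) s) :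
    ∀ s ∈ Set.Icc (-M) M, w s ≤ 2 * B * Real.exp (lam * (|s| - M)) := by
  intro s hs
  set k := 2 * B * exp (-(lam * M))
  have hB_le : B ≤ k * cosh (lam * M) := by
    calc B = B * exp (-(lam * M)) * exp (lam * M) := by rw [mul_assoc, ← exp_add]; simp
      _ ≤ B * exp (-(lam * M)) * (2 * cosh (lam * M)) := by
        gcongr; exact exp_le_two_mul_cosh _
      _ = k * cosh (lam * M) := by ring
  have hle := le_of_iteratedDeriv_two_comparison (pow_pos hlam 2) hreg
    (v := fun s => k * cosh (lam * s)) (by fun_prop)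
    (fun x hx => by
      rw [← iteratedDerivWithin_of_mem_nhds (Icc_mem_nhds hx.1 hx.2)]
      exact hconv x (Ioo_subset_Icc_self hx))
    (fun x _ => (iteratedDeriv_two_const_mul_cosh_mul k lam x).le)
    (by simpa [cosh_neg] using (hwB _ (left_mem_Icc.2 (by linarith))).trans hB_le)
    ((hwB _ (right_mem_Icc.2 (by linarith))).trans hB_le) s hs
  calc w s ≤ k * cosh (lam * s) := hle
    _ ≤ k * exp (lam * |s|) := by
      gcongr
      simpa [abs_mul, abs_of_pos hlam] using cosh_le_exp_abs (lam * s)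
    _ = 2 * B * exp (lam * (|s| - M)) := by
      rw [mul_assoc, ← exp_add]; ring_nf

/-- ODE comparison on `[-M,M]`: a nonnegative `C²` function bounded by `B` with
`w'' ≥ λ² w` satisfies `w(s) ≤ 2 B e^{λ(|s|-M)}`. -/
theorem ode_comparison
    (M lam B : ℝ) (hM : 0 < M) (hlam : 0 < lam) (hB : 0 ≤ B) (w : ℝ → ℝ)
    (hreg : ContDiffOn ℝ 2 w (Set.Icc (-M) M))
    (hw0 : ∀ s ∈ Set.Icc (-M) M, 0 ≤ w s)
    (hwB : ∀ s ∈ Set.Icc (-M) M, w s ≤ B)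
    (hconv : ∀ s ∈ Set.Icc (-M) M,
      lam ^ 2 * w s ≤ iteratedDerivWithin 2 w (Set.Icc (-M) M) s) :
    ∀ s ∈ Set.Icc (-M) M, w s ≤ 2 * B * Real.exp (lam * (|s| - M)) :=
  ode_comparison_general M lam B hM hlam hB w hreg hwB hconv
end

section
/- Let p ≥ 1 be an integer and let q, a, b, c, d ∈ ℝ^p. Define v : ℝ × ℝ → ℝ^p by v(s,θ) = q s + a e^s cos θ + b e^s sin θ + c e^{-s} cos θ + d e^{-s} sin θ. Suppose v is weakly conformal, i.e. for all (s,θ) ∈ ℝ²: ‖∂_s v(s,θ)‖ = ‖∂_θ v(s,θ)‖ and ∂_s v(s,θ) · ∂_θ v(s,θ) = 0. Then: ‖q‖² = 2 (a·c + b·d); q·a = q·b = q·c = q·d = 0; ‖a‖ = ‖b‖; ‖c‖ = ‖d‖; a·b = 0; c·d = 0; and a·d − b·c = 0. -/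
open scoped RealInnerProductSpace

set_option maxHeartbeats 2000000 in
/-- Theorem 1.5: if the explicit neck map
`v(s,θ) = q s + a e^s cos θ + b e^s sin θ + c e^{-s} cos θ + d e^{-s} sin θ`
is weakly conformal, then `‖q‖² = 2(a·c + b·d)`, `q ⊥ a,b,c,d`, `‖a‖ = ‖b‖`, `‖c‖ = ‖d‖`,
`a·b = c·d = 0`, and `a·d - b·c = 0`. -/
theorem conformal_neck_relations
    (p : ℕ) (hp : 1 ≤ p) (q a b c d : EuclideanSpace ℝ (Fin p))
    (hnorm : ∀ s θ : ℝ,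
      ‖q + (Real.exp s * Real.cos θ) • a + (Real.exp s * Real.sin θ) • b -
          (Real.exp (-s) * Real.cos θ) • c - (Real.exp (-s) * Real.sin θ) • d‖ =
        ‖-((Real.exp s * Real.sin θ) • a) + (Real.exp s * Real.cos θ) • b -
          (Real.exp (-s) * Real.sin θ) • c + (Real.exp (-s) * Real.cos θ) • d‖)
    (horth : ∀ s θ : ℝ,
      ⟪q + (Real.exp s * Real.cos θ) • a + (Real.exp s * Real.sin θ) • b -
          (Real.exp (-s) * Real.cos θ) • c - (Real.exp (-s) * Real.sin θ) • d,
        -((Real.exp s * Real.sin θ) • a) + (Real.exp s * Real.cos θ) • b -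
          (Real.exp (-s) * Real.sin θ) • c + (Real.exp (-s) * Real.cos θ) • d⟫ = 0) :
    ‖q‖ ^ 2 = 2 * (⟪a, c⟫ + ⟪b, d⟫) ∧
    ⟪q, a⟫ = 0 ∧ ⟪q, b⟫ = 0 ∧ ⟪q, c⟫ = 0 ∧ ⟪q, d⟫ = 0 ∧
    ‖a‖ = ‖b‖ ∧ ‖c‖ = ‖d‖ ∧ ⟪a, b⟫ = 0 ∧ ⟪c, d⟫ = 0 ∧
    ⟪a, d⟫ - ⟪b, c⟫ = 0 := by

  -- master identity from the norm condition
  have hG : ∀ s θ : ℝ,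
      ⟪q,q⟫ + (Real.exp s)^2*((Real.cos θ)^2-(Real.sin θ)^2)*(⟪a,a⟫-⟪b,b⟫)
      + (Real.exp (-s))^2*((Real.cos θ)^2-(Real.sin θ)^2)*(⟪c,c⟫-⟪d,d⟫)
      + 2*Real.exp s*(Real.cos θ*⟪q,a⟫ + Real.sin θ*⟪q,b⟫)
      - 2*Real.exp (-s)*(Real.cos θ*⟪q,c⟫ + Real.sin θ*⟪q,d⟫)
      + 4*(Real.exp s)^2*Real.cos θ*Real.sin θ*⟪a,b⟫
      + 4*(Real.exp (-s))^2*Real.cos θ*Real.sin θ*⟪c,d⟫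
      - 2*(Real.exp s*Real.exp (-s))*((Real.cos θ)^2+(Real.sin θ)^2)*(⟪a,c⟫+⟪b,d⟫) = 0 := by
    intro s θ
    have h := hnorm s θ
    have h2 := congrArg (· ^ 2) h
    rw [← real_inner_self_eq_norm_sq, ← real_inner_self_eq_norm_sq] at h2
    simp only [inner_add_left, inner_add_right, inner_sub_left, inner_sub_right,
      inner_neg_left, inner_neg_right, real_inner_smul_left, real_inner_smul_right] at h2
    simp only [real_inner_comm q a, real_inner_comm q b, real_inner_comm q c,
      real_inner_comm q d, real_inner_comm a b, real_inner_comm a c, real_inner_comm a d,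
      real_inner_comm b c, real_inner_comm b d, real_inner_comm c d] at h2
    linear_combination h2
  -- master identity from the orthogonality condition
  have hF : ∀ s θ : ℝ,
      -(Real.exp s*Real.sin θ*⟪q,a⟫) + Real.exp s*Real.cos θ*⟪q,b⟫
      - Real.exp (-s)*Real.sin θ*⟪q,c⟫ + Real.exp (-s)*Real.cos θ*⟪q,d⟫
      - (Real.exp s)^2*Real.cos θ*Real.sin θ*(⟪a,a⟫-⟪b,b⟫)
      + (Real.exp (-s))^2*Real.cos θ*Real.sin θ*(⟪c,c⟫-⟪d,d⟫)
      + (Real.exp s)^2*((Real.cos θ)^2-(Real.sin θ)^2)*⟪a,b⟫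
      - (Real.exp (-s))^2*((Real.cos θ)^2-(Real.sin θ)^2)*⟪c,d⟫
      + (Real.exp s*Real.exp (-s))*((Real.cos θ)^2+(Real.sin θ)^2)*(⟪a,d⟫-⟪b,c⟫) = 0 := by
    intro s θ
    have h := horth s θ
    simp only [inner_add_left, inner_add_right, inner_sub_left, inner_sub_right,
      inner_neg_left, inner_neg_right, real_inner_smul_left, real_inner_smul_right] at h
    simp only [real_inner_comm q a, real_inner_comm q b, real_inner_comm q c,
      real_inner_comm q d, real_inner_comm a b, real_inner_comm a c, real_inner_comm a d,
      real_inner_comm b c, real_inner_comm b d, real_inner_comm c d] at h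
    linear_combination h
  have e2 : Real.exp (Real.log 2) = 2 := Real.exp_log (by norm_num)
  have e2' : Real.exp (-Real.log 2) = 2⁻¹ := by rw [Real.exp_neg, e2]
  have g1 := hG 0 0
  have g2 := hG 0 Real.pi
  have g3 := hG (Real.log 2) 0
  have g4 := hG (Real.log 2) Real.pi
  have g5 := hG 0 (Real.pi/2)
  have g6 := hG 0 (-(Real.pi/2))
  have g7 := hG (Real.log 2) (Real.pi/2)
  have g8 := hG (Real.log 2) (-(Real.pi/2))
  have g9 := hG (-Real.log 2) 0
  have f1 := hF 0 0
  have f2 := hF (Real.log 2) 0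
  have f3 := hF (-Real.log 2) 0
  simp only [e2, e2', neg_neg, Real.exp_zero, neg_zero, Real.cos_zero, Real.sin_zero,
    Real.cos_pi, Real.sin_pi, Real.cos_pi_div_two, Real.sin_pi_div_two,
    Real.cos_neg, Real.sin_neg] at g1 g2 g3 g4 g5 g6 g7 g8 g9 f1 f2 f3
  clear hnorm horth hG hF hp
  ring_nf at g1 g2 g3 g4 g5 g6 g7 g8 g9 f1 f2 f3
  have hqa : ⟪q,a⟫ = 0 := by linarith
  have hqb : ⟪q,b⟫ = 0 := by linarith
  have hqc : ⟪q,c⟫ = 0 := by linarith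
  have hqd : ⟪q,d⟫ = 0 := by linarith
  have hab : ⟪a,b⟫ = 0 := by linarith
  have hcd : ⟪c,d⟫ = 0 := by linarith
  have hAB : ⟪a,a⟫ = ⟪b,b⟫ := by linarith
  have hCD : ⟪c,c⟫ = ⟪d,d⟫ := by linarith
  have hQ : ⟪q,q⟫ = 2 * (⟪a,c⟫ + ⟪b,d⟫) := by linarith
  have hE : ⟪a,d⟫ - ⟪b,c⟫ = 0 := by linarith
  refine ⟨?_, hqa, hqb, hqc, hqd, ?_, ?_, hab, hcd, hE⟩
  · rw [← real_inner_self_eq_norm_sq]; exact hQ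
  · rw [← Real.sqrt_sq (norm_nonneg a), ← Real.sqrt_sq (norm_nonneg b),
      ← real_inner_self_eq_norm_sq, ← real_inner_self_eq_norm_sq, hAB]
  · rw [← Real.sqrt_sq (norm_nonneg c), ← Real.sqrt_sq (norm_nonneg d),
      ← real_inner_self_eq_norm_sq, ← real_inner_self_eq_norm_sq, hCD]
end

section
/- Let q, a, b, c, d ∈ ℝ³ satisfy: ‖a‖ = ‖b‖ ≠ 0, a·b = 0, ‖c‖ = ‖d‖ ≠ 0, c·d = 0, q·a = q·b = q·c = q·d = 0, ‖q‖² = 2 (a·c + b·d), and a·d − b·c = 0. Then the linear span of {a,b} equals the linear span of {c,d}. -/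
/-!
Let `S = span {a, b}` and split `c = c_S + c'`, `d = d_S + d'` along `S ⊕ Sᗮ`; in `ℝ³` the
complement `Sᗮ` is a line containing `c'` and `d'`. If `q ≠ 0`, then `q` spans that line and is
orthogonal to `c'` and `d'`, so both vanish. If `q = 0`, the relations say that the matrix
`(⟪a, c⟫, ⟪a, d⟫; ⟪b, c⟫, ⟪b, d⟫)` has the shape `(x, y; y, -x)`, so `c_S ⊥ d_S` and
`‖c_S‖ = ‖d_S‖`; subtracting from `c ⊥ d`, `‖c‖ = ‖d‖` gives `c' ⊥ d'` and `‖c'‖ = ‖d'‖`, which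
on a line forces `c' = d' = 0`. Either way `c, d ∈ S`, and both planes are two-dimensional.
-/

open scoped RealInnerProductSpace
open Module Submodule

variable {E : Type*} [NormedAddCommGroup E] [InnerProductSpace ℝ E]

lemma mem_orthogonal_span_pair_iff {a b v : E} :
    v ∈ (span ℝ {a, b})ᗮ ↔ ⟪a, v⟫ = 0 ∧ ⟪b, v⟫ = 0 := by
  rw [← span_singleton_le_iff_mem, ← isOrtho_iff_le, isOrtho_span]
  simp [real_inner_comm v]

lemma finrank_span_pair_of_inner_eq_zero {a b : E} (ha : a ≠ 0) (hb : b ≠ 0)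
    (hab : ⟪a, b⟫ = 0) : finrank ℝ (span ℝ {a, b}) = 2 := by
  have hli : LinearIndependent ℝ ![a, b] := by
    refine linearIndependent_of_ne_zero_of_inner_eq_zero (fun i => ?_) fun i j hij => ?_
    · fin_cases i <;> assumption
    · fin_cases i <;> fin_cases j <;> simp_all [real_inner_comm a]
  rw [← Matrix.range_cons_cons_empty a b ![], finrank_span_eq_card hli, Fintype.card_fin]

lemma eq_zero_or_eq_zero_of_inner_eq_zero {K : Submodule ℝ E} (hK : finrank ℝ K = 1) {u v : E}
    (hu : u ∈ K) (hv : v ∈ K) (huv : ⟪u, v⟫ = 0) : u = 0 ∨ v = 0 := by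
  refine or_iff_not_imp_left.mpr fun hu0 => ?_
  obtain ⟨t, ht⟩ :=
    (finrank_eq_one_iff_of_nonzero' (⟨u, hu⟩ : K) (by simpa using hu0)).mp hK ⟨v, hv⟩
  obtain rfl : t • u = v := congrArg Subtype.val ht
  rw [real_inner_smul_right, mul_eq_zero, inner_self_eq_zero] at huv
  simp [huv.resolve_right hu0]

lemma eq_zero_of_inner_eq_zero_of_inner_self_eq {K : Submodule ℝ E} (hK : finrank ℝ K = 1)
    {u v : E} (hu : u ∈ K) (hv : v ∈ K) (huv : ⟪u, v⟫ = 0) (hn : ⟪u, u⟫ = ⟪v, v⟫) :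
    u = 0 ∧ v = 0 := by
  rcases eq_zero_or_eq_zero_of_inner_eq_zero hK hu hv huv with rfl | rfl
  · simpa [eq_comm] using hn
  · simpa using hn

/-- The orthogonal projection onto `span {a, b}` when `a ⊥ b` and `‖a‖ = ‖b‖`. -/
noncomputable def pairProj (a b v : E) : E := (‖a‖ ^ 2)⁻¹ • (⟪a, v⟫ • a + ⟪b, v⟫ • b)

lemma pairProj_mem_span (a b v : E) : pairProj a b v ∈ span ℝ {a, b} :=
  smul_mem _ _ (add_mem (smul_mem _ _ (subset_span (by simp)))
    (smul_mem _ _ (subset_span (by simp))))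

section OrthogonalPair

variable {a b : E} (hab : ‖a‖ = ‖b‖) (ha : ‖a‖ ≠ 0) (habo : ⟪a, b⟫ = 0)
include hab ha habo

lemma sub_pairProj_mem_orthogonal (v : E) : v - pairProj a b v ∈ (span ℝ {a, b})ᗮ := by
  have hba : ⟪b, a⟫ = 0 := by rwa [real_inner_comm]
  rw [mem_orthogonal_span_pair_iff, pairProj]
  simp only [inner_sub_right, inner_smul_right, inner_add_right, real_inner_self_eq_norm_sq,
    habo, hba, ← hab]
  constructor <;> field_simp <;> ring

lemma inner_sub_pairProj (c d : E) :
    ⟪c - pairProj a b c, d - pairProj a b d⟫ =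
      ⟪c, d⟫ - (⟪a, c⟫ * ⟪a, d⟫ + ⟪b, c⟫ * ⟪b, d⟫) / ‖a‖ ^ 2 := by
  have hperp : ⟪c - pairProj a b c, pairProj a b d⟫ = 0 := inner_left_of_mem_orthogonal
    (pairProj_mem_span a b d) (sub_pairProj_mem_orthogonal hab ha habo c)
  rw [inner_sub_right, hperp, sub_zero, inner_sub_left, pairProj]
  simp only [inner_smul_left, inner_add_left, real_inner_comm c, RCLike.conj_to_real]
  field_simp

lemma mem_span_pair_of_inner_eq_zero (hS : finrank ℝ (span ℝ {a, b})ᗮ = 1) {q : E}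
    (hq0 : q ≠ 0) (hqa : ⟪q, a⟫ = 0) (hqb : ⟪q, b⟫ = 0) {v : E} (hqv : ⟪q, v⟫ = 0) :
    v ∈ span ℝ {a, b} := by
  have hqS : q ∈ (span ℝ {a, b})ᗮ :=
    mem_orthogonal_span_pair_iff.mpr ⟨by rwa [real_inner_comm], by rwa [real_inner_comm]⟩
  have hperp : ⟪q, v - pairProj a b v⟫ = 0 := by
    rw [inner_sub_right, hqv, inner_left_of_mem_orthogonal (pairProj_mem_span a b v) hqS,
      sub_zero]
  have hv := (eq_zero_or_eq_zero_of_inner_eq_zero hS hqS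
    (sub_pairProj_mem_orthogonal hab ha habo v) hperp).resolve_left hq0
  exact sub_eq_zero.mp hv ▸ pairProj_mem_span a b v

lemma mem_span_pair_of_conformal (hS : finrank ℝ (span ℝ {a, b})ᗮ = 1) {c d : E}
    (hcd : ‖c‖ = ‖d‖) (hcdo : ⟪c, d⟫ = 0) (hdiag : ⟪b, d⟫ = -⟪a, c⟫) (hanti : ⟪a, d⟫ = ⟪b, c⟫) :
    c ∈ span ℝ {a, b} ∧ d ∈ span ℝ {a, b} := by
  obtain ⟨hc, hd⟩ := eq_zero_of_inner_eq_zero_of_inner_self_eq hS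
    (sub_pairProj_mem_orthogonal hab ha habo c) (sub_pairProj_mem_orthogonal hab ha habo d)
    (by rw [inner_sub_pairProj hab ha habo, hcdo, hdiag, hanti]; ring)
    (by simp only [inner_sub_pairProj hab ha habo, real_inner_self_eq_norm_sq, hcd, hdiag, hanti]
        ring)
  exact ⟨sub_eq_zero.mp hc ▸ pairProj_mem_span a b c, sub_eq_zero.mp hd ▸ pairProj_mem_span a b d⟩

end OrthogonalPair

/-- Corollary 1.6, first assertion: under the conformal neck relations in `ℝ³`,
the plane spanned by `(a,b)` coincides with the plane spanned by `(c,d)`. -/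
theorem neck_planes_coincide
    (q a b c d : EuclideanSpace ℝ (Fin 3))
    (hab : ‖a‖ = ‖b‖) (ha : ‖a‖ ≠ 0) (habo : ⟪a, b⟫ = 0)
    (hcd : ‖c‖ = ‖d‖) (hc : ‖c‖ ≠ 0) (hcdo : ⟪c, d⟫ = 0)
    (hqa : ⟪q, a⟫ = 0) (hqb : ⟪q, b⟫ = 0) (hqc : ⟪q, c⟫ = 0) (hqd : ⟪q, d⟫ = 0)
    (hq : ‖q‖ ^ 2 = 2 * (⟪a, c⟫ + ⟪b, d⟫))
    (hdet : ⟪a, d⟫ - ⟪b, c⟫ = 0) :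
    Submodule.span ℝ {a, b} = Submodule.span ℝ {c, d} := by
  have hS : finrank ℝ (span ℝ {a, b}) = 2 := finrank_span_pair_of_inner_eq_zero
    (norm_ne_zero_iff.mp ha) (norm_ne_zero_iff.mp (hab ▸ ha)) habo
  have hSperp : finrank ℝ (span ℝ {a, b})ᗮ = 1 := by
    have := (span ℝ {a, b}).finrank_add_finrank_orthogonal
    rw [finrank_euclideanSpace_fin] at this
    omega
  have hcdS : c ∈ span ℝ {a, b} ∧ d ∈ span ℝ {a, b} := by
    by_cases hq0 : q = 0
    · subst hq0
      exact mem_span_pair_of_conformal hab ha habo hSperp hcd hcdo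
        (by rw [norm_zero, sq, zero_mul] at hq; linarith) (sub_eq_zero.mp hdet)
    · exact ⟨mem_span_pair_of_inner_eq_zero hab ha habo hSperp hq0 hqa hqb hqc,
        mem_span_pair_of_inner_eq_zero hab ha habo hSperp hq0 hqa hqb hqd⟩
  refine (eq_of_le_of_finrank_eq (span_le.mpr ?_) ?_).symm
  · rintro x (rfl | rfl)
    exacts [hcdS.1, hcdS.2]
  · rw [hS, finrank_span_pair_of_inner_eq_zero
      (norm_ne_zero_iff.mp hc) (norm_ne_zero_iff.mp (hcd ▸ hc)) hcdo]
end

section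
/- Let q, a, b, c, d ∈ ℝ³ satisfy: ‖a‖ = ‖b‖ ≠ 0, a·b = 0, ‖c‖ = ‖d‖ ≠ 0, c·d = 0, q·a = q·b = q·c = q·d = 0, ‖q‖² = 2 (a·c + b·d), a·d − b·c = 0, and q ≠ 0. Then there exists a real number λ > 0 such that a = λ c and b = λ d. -/
open scoped RealInnerProductSpace

/-!
Since `q ≠ 0` is orthogonal to the conformal frame `a, b`, the three vectors span `ℝ³`, so `c` and
`d` lie in the plane of `a, b`: with `k = ‖a‖²`, `k c = α a + β b` and `k d = γ a + δ b`, where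
`α = a·c`, `β = b·c`, `γ = a·d`, `δ = b·d`.
The relation `a·d = b·c` is `γ = β`, orthogonality of `c, d` becomes `β (α + δ) = 0`, and
`‖q‖² = 2 (α + δ) > 0`; hence `β = γ = 0`, and `‖c‖ = ‖d‖` forces `α = δ > 0`.
-/

open Module

section

variable {E : Type*} [NormedAddCommGroup E] [InnerProductSpace ℝ E]

theorem eq_zero_of_forall_inner_eq_zero_of_orthogonal_of_card_eq_finrank [FiniteDimensional ℝ E]
    {ι : Type*} [Fintype ι] {v : ι → E} (hv : ∀ i, v i ≠ 0)
    (ho : Pairwise fun i j => ⟪v i, v j⟫ = 0) (hcard : Fintype.card ι = finrank ℝ E)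
    {x : E} (hx : ∀ i, ⟪v i, x⟫ = 0) : x = 0 := by
  let basis := basisOfLinearIndependentOfCardEqFinrank' v
    (linearIndependent_of_ne_zero_of_inner_eq_zero hv ho) hcard
  exact InnerProductSpace.ext_inner_left_basis basis fun i => by simp [basis, hx]

theorem norm_sq_smul_eq_inner_smul_add_inner_smul (hE : finrank ℝ E = 3) {q a b v : E}
    (hq : q ≠ 0) (ha : a ≠ 0) (hab : ‖a‖ = ‖b‖) (habo : ⟪a, b⟫ = 0)
    (hqa : ⟪q, a⟫ = 0) (hqb : ⟪q, b⟫ = 0) (hqv : ⟪q, v⟫ = 0) :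
    ‖a‖ ^ 2 • v = ⟪a, v⟫ • a + ⟪b, v⟫ • b := by
  have : FiniteDimensional ℝ E := .of_finrank_pos (by omega)
  have hb : b ≠ 0 := by rw [← norm_ne_zero_iff, ← hab]; exact norm_ne_zero_iff.mpr ha
  rw [← sub_eq_zero]
  refine eq_zero_of_forall_inner_eq_zero_of_orthogonal_of_card_eq_finrank (v := ![q, a, b])
    ?_ ?_ (by simp [hE]) ?_
  · intro i
    fin_cases i <;> simpa
  · intro i j hij
    fin_cases i <;> fin_cases j <;> simp_all [real_inner_comm]
  · intro i
    fin_cases i <;>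
      simp [inner_sub_right, inner_add_right, real_inner_smul_right, hqa, hqb, hqv, habo,
        real_inner_comm a b, ← hab] <;>
      ring

theorem norm_sq_mul_inner_eq_of_norm_sq_smul_eq {a b u v : E} {α β γ δ : ℝ} (ha : a ≠ 0)
    (hab : ‖a‖ = ‖b‖) (habo : ⟪a, b⟫ = 0)
    (hu : ‖a‖ ^ 2 • u = α • a + β • b) (hv : ‖a‖ ^ 2 • v = γ • a + δ • b) :
    ‖a‖ ^ 2 * ⟪u, v⟫ = α * γ + β * δ := by
  refine mul_left_cancel₀ (by positivity : ‖a‖ ^ 2 ≠ 0) ?_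
  calc ‖a‖ ^ 2 * (‖a‖ ^ 2 * ⟪u, v⟫) = ⟪‖a‖ ^ 2 • u, ‖a‖ ^ 2 • v⟫ := by
        rw [real_inner_smul_left, real_inner_smul_right]
    _ = ‖a‖ ^ 2 * (α * γ + β * δ) := by
        rw [hu, hv]
        simp only [inner_add_left, inner_add_right, real_inner_smul_left, real_inner_smul_right,
          real_inner_self_eq_norm_sq, habo, real_inner_comm a b, ← hab]
        ring

end

theorem eq_zero_and_eq_of_mul_add_mul_eq_zero {α γ δ : ℝ} (horth : α * γ + γ * δ = 0)
    (hnorm : α ^ 2 + γ ^ 2 = γ ^ 2 + δ ^ 2) (htrace : 0 < α + δ) : γ = 0 ∧ α = δ := by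
  have hγ : γ * (α + δ) = 0 := by linear_combination horth
  have hαδ : (α - δ) * (α + δ) = 0 := by linear_combination hnorm
  exact ⟨(mul_eq_zero.mp hγ).resolve_right htrace.ne',
    sub_eq_zero.mp ((mul_eq_zero.mp hαδ).resolve_right htrace.ne')⟩

theorem neck_catenoid_case_general
    (q a b c d : EuclideanSpace ℝ (Fin 3))
    (hab : ‖a‖ = ‖b‖) (ha : ‖a‖ ≠ 0) (habo : ⟪a, b⟫ = 0)
    (hcd : ‖c‖ = ‖d‖) (hcdo : ⟪c, d⟫ = 0)
    (hqa : ⟪q, a⟫ = 0) (hqb : ⟪q, b⟫ = 0) (hqc : ⟪q, c⟫ = 0) (hqd : ⟪q, d⟫ = 0)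
    (hq : ‖q‖ ^ 2 = 2 * (⟪a, c⟫ + ⟪b, d⟫))
    (hdet : ⟪a, d⟫ - ⟪b, c⟫ = 0)
    (hqne : q ≠ 0) :
    ∃ lam : ℝ, 0 < lam ∧ a = lam • c ∧ b = lam • d := by
  have ha₀ : a ≠ 0 := norm_ne_zero_iff.mp ha
  have expand {v} (hqv : ⟪q, v⟫ = 0) := norm_sq_smul_eq_inner_smul_add_inner_smul
    finrank_euclideanSpace_fin hqne ha₀ hab habo hqa hqb hqv
  have hc' := expand hqc
  have hd' := expand hqd
  rw [← sub_eq_zero.mp hdet] at hc'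
  have horth := norm_sq_mul_inner_eq_of_norm_sq_smul_eq ha₀ hab habo hc' hd'
  have hnorm : ‖a‖ ^ 2 * ⟪c, c⟫ = ‖a‖ ^ 2 * ⟪d, d⟫ := by
    simp only [real_inner_self_eq_norm_sq, hcd]
  rw [norm_sq_mul_inner_eq_of_norm_sq_smul_eq ha₀ hab habo hc' hc',
    norm_sq_mul_inner_eq_of_norm_sq_smul_eq ha₀ hab habo hd' hd'] at hnorm
  have htrace : 0 < ⟪a, c⟫ + ⟪b, d⟫ := by
    have : 0 < ‖q‖ ^ 2 := by positivity
    linarith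
  obtain ⟨hoff, hdiag⟩ := eq_zero_and_eq_of_mul_add_mul_eq_zero
    (by rw [← horth, hcdo, mul_zero]) (by linear_combination hnorm) htrace
  have hpos : 0 < ⟪a, c⟫ := by linarith
  rw [hoff, zero_smul, add_zero] at hc'
  rw [hoff, zero_smul, zero_add, ← hdiag] at hd'
  refine ⟨‖a‖ ^ 2 / ⟪a, c⟫, by positivity, ?_, ?_⟩
  · rw [div_eq_inv_mul, mul_smul, hc', inv_smul_smul₀ hpos.ne']
  · rw [div_eq_inv_mul, mul_smul, hd', inv_smul_smul₀ hpos.ne']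

/-- Corollary 1.6, catenoid case: under the conformal neck relations in `ℝ³` with
`q ≠ 0`, one has `a = λ c` and `b = λ d` for some `λ > 0`. -/
theorem neck_catenoid_case
    (q a b c d : EuclideanSpace ℝ (Fin 3))
    (hab : ‖a‖ = ‖b‖) (ha : ‖a‖ ≠ 0) (habo : ⟪a, b⟫ = 0)
    (hcd : ‖c‖ = ‖d‖) (hc : ‖c‖ ≠ 0) (hcdo : ⟪c, d⟫ = 0)
    (hqa : ⟪q, a⟫ = 0) (hqb : ⟪q, b⟫ = 0) (hqc : ⟪q, c⟫ = 0) (hqd : ⟪q, d⟫ = 0)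
    (hq : ‖q‖ ^ 2 = 2 * (⟪a, c⟫ + ⟪b, d⟫))
    (hdet : ⟪a, d⟫ - ⟪b, c⟫ = 0)
    (hqne : q ≠ 0) :
    ∃ lam : ℝ, 0 < lam ∧ a = lam • c ∧ b = lam • d :=
  neck_catenoid_case_general q a b c d hab ha habo hcd hcdo hqa hqb hqc hqd hq hdet hqne
end
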